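/- arXiv:2507.10872 — 2 statements merged into one kernel-verified Lean document; each statement's English description precedes it below -/
import Mathlib

section
/- Fix delivery compensations w, a buyer b, a store s, and the tips t_{b's'} of all buyers b' ≠ b. Define t̲_{bs} as the minimum over τ ≥ 0 such that there exist tips t_b for buyer b with t_{bs} = τ and a courier d for whom (b,s) is a utility-maximizing order under (w, t_b, t_{−b}) with nonnegative utility. Then t̲_{bs} = min_d max{0, c_d(b,s) − w_{bs}, max_{(b',s') ≠ (b,s)} (w_{b's'} + t_{b's'} − c_d(b',s') − w_{bs} + c_d(b,s))}, where in the inner maximum t_{bs'} = 0 for every store s' ≠ s; moreover, the minimum is attained by taking t_{bs'} = 0 for all s' ≠ s. -/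
/-!
Buyer `b`'s tips on her other orders only raise the utilities competing with `(b, s)`, so the
cheapest way to put `(b, s)` into courier `d`'s best responses is to tip nothing elsewhere. With
those tips, a tip `τ ≥ 0` on `(b, s)` works for `d` exactly when it covers `c_d(b,s) − w_{bs}` and
every gap between a rival order's utility and that of `(b, s)`, i.e. when `τ` is at least the
`d`-th term of the closed form. The minimum tip is therefore the least of these terms, and the
courier attaining it witnesses the second claim.
-/

open scoped Classical
noncomputable section

namespace DeliveryPlatform

variable {m n l : ℕ}

/-- A (three-sided) allocation `x` is feasible if each buyer, each store and each
courier appears in at most one executed triple. -/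
def Feasible (x : Fin m → Fin n → Fin l → Bool) : Prop :=
  (∀ b s d s' d', x b s d → x b s' d' → s = s' ∧ d = d') ∧
  (∀ b s d b' d', x b s d → x b' s d' → b = b' ∧ d = d') ∧
  (∀ b s d b' s', x b s d → x b' s' d → b = b' ∧ s = s')

/-- The welfare of an allocation: `W(x) = Σ x_{bsd} (v_b(s) − c_d(b,s))`. -/
def Welfare (v : Fin m → Fin n → ℝ) (c : Fin l → Fin m → Fin n → ℝ)
    (x : Fin m → Fin n → Fin l → Bool) : ℝ :=
  ∑ b, ∑ s, ∑ d, if x b s d then v b s - c d b s else 0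

/-- The optimal welfare over all feasible allocations. -/
def OPT (v : Fin m → Fin n → ℝ) (c : Fin l → Fin m → Fin n → ℝ) : ℝ :=
  sSup {r : ℝ | ∃ x, Feasible x ∧ Welfare v c x = r}

/-- Utility of courier `d` from delivering the order `(b,s)`:
`w_{bs} + t_{bs} − c_d(b,s)`. -/
def cUtil (c : Fin l → Fin m → Fin n → ℝ) (w t : Fin m → Fin n → ℝ)
    (d : Fin l) (b : Fin m) (s : Fin n) : ℝ :=
  w b s + t b s - c d b s

/-- `(b,s) ∈ BR_d(w,t)`: the order `(b,s)` is utility-maximizing for courier `d`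
and has nonnegative utility. -/
def InBR (c : Fin l → Fin m → Fin n → ℝ) (w t : Fin m → Fin n → ℝ)
    (d : Fin l) (b : Fin m) (s : Fin n) : Prop :=
  0 ≤ cUtil c w t d b s ∧ ∀ b' s', cUtil c w t d b' s' ≤ cUtil c w t d b s

/-- Replace buyer `b`'s tip vector by `tb`, keeping the tips of all other
buyers (`t_{−b}`) fixed. -/
def updateTips (t : Fin m → Fin n → ℝ) (b : Fin m) (tb : Fin n → ℝ) :
    Fin m → Fin n → ℝ :=
  fun b' s' => if b' = b then tb s' else t b' s'

/-- The minimum tip `t̲_{bs}(w, t_{−b})`: the smallest nonnegative tip that buyer `b`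
can attach to the order `(b,s)` (as part of some nonnegative tip vector)
so that `(b,s) ∈ BR_d` for some courier `d`. -/
def minTip (c : Fin l → Fin m → Fin n → ℝ) (w t : Fin m → Fin n → ℝ)
    (b : Fin m) (s : Fin n) : ℝ :=
  sInf {τ : ℝ | 0 ≤ τ ∧ ∃ tb : Fin n → ℝ, (∀ s', 0 ≤ tb s') ∧ tb s = τ ∧
    ∃ d, InBR c w (updateTips t b tb) d b s}

/-- A with-tip equilibrium `(p, w, t, x)`. -/
def WithTipEq (v : Fin m → Fin n → ℝ) (c : Fin l → Fin m → Fin n → ℝ)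
    (p : Fin n → ℝ) (w t : Fin m → Fin n → ℝ)
    (x : Fin m → Fin n → Fin l → Bool) : Prop :=
  Feasible x ∧
  (∀ s, 0 ≤ p s) ∧ (∀ b s, 0 ≤ w b s) ∧ (∀ b s, 0 ≤ t b s) ∧
  -- every matched buyer buys from a utility-maximizing store, with nonnegative
  -- utility, and pays exactly the minimum tip for the store she buys from
  (∀ b s, (∃ d, x b s d) →
    0 ≤ v b s - p s - minTip c w t b s ∧
    (∀ s', v b s' - p s' - minTip c w t b s' ≤ v b s - p s - minTip c w t b s) ∧
    t b s = minTip c w t b s) ∧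
  -- an unmatched buyer finds no store of positive utility
  (∀ b, (∀ s d, ¬ x b s d) → ∀ s, v b s - p s - minTip c w t b s ≤ 0) ∧
  -- every courier delivers an order in BR_d(w,t)
  (∀ d b s, x b s d → InBR c w t d b s) ∧
  (∀ d, (∀ b s, ¬ x b s d) → ∀ b s, cUtil c w t d b s ≤ 0) ∧
  -- stores not bought from have zero purchase price
  (∀ s, (∀ b d, ¬ x b s d) → p s = 0) ∧
  -- orders not delivered have zero compensation and zero tip
  (∀ b s, (∀ d, ¬ x b s d) → w b s = 0 ∧ t b s = 0)

/-- A without-tip equilibrium `(p, w, x)`. -/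
def WithoutTipEq (v : Fin m → Fin n → ℝ) (c : Fin l → Fin m → Fin n → ℝ)
    (p : Fin n → ℝ) (w : Fin m → Fin n → ℝ)
    (x : Fin m → Fin n → Fin l → Bool) : Prop :=
  Feasible x ∧
  (∀ s, 0 ≤ p s) ∧ (∀ b s, 0 ≤ w b s) ∧
  (∀ b s, (∃ d, x b s d) →
    0 ≤ v b s - p s ∧ ∀ s', v b s' - p s' ≤ v b s - p s) ∧
  (∀ b, (∀ s d, ¬ x b s d) → ∀ s, v b s - p s ≤ 0) ∧
  (∀ d b s, x b s d →
    0 ≤ w b s - c d b s ∧ ∀ b' s', w b' s' - c d b' s' ≤ w b s - c d b s) ∧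
  (∀ d, (∀ b s, ¬ x b s d) → ∀ b s, w b s - c d b s ≤ 0) ∧
  (∀ s, (∀ b d, ¬ x b s d) → p s = 0) ∧
  (∀ b s, (∀ d, ¬ x b s d) → w b s = 0)

theorem sSup_le_iff_of_nonneg {S : Set ℝ} (hS : BddAbove S) {τ : ℝ} (hτ : 0 ≤ τ) :
    sSup S ≤ τ ↔ ∀ x ∈ S, x ≤ τ :=
  ⟨fun h _ hx => (le_csSup hS hx).trans h, fun h => Real.sSup_le h hτ⟩

section Threshold

variable (c : Fin l → Fin m → Fin n → ℝ) (w t : Fin m → Fin n → ℝ) (b : Fin m) (s : Fin n)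

theorem updateTips_self (tb : Fin n → ℝ) (s' : Fin n) : updateTips t b tb b s' = tb s' :=
  if_pos rfl

theorem updateTips_of_ne (tb : Fin n → ℝ) {b' : Fin m} (hb : b' ≠ b) (s' : Fin n) :
    updateTips t b tb b' s' = t b' s' :=
  if_neg hb

theorem updateTips_single_of_ne (τ : ℝ) {b' : Fin m} {s' : Fin n} (h : (b', s') ≠ (b, s)) :
    updateTips t b (Pi.single s τ) b' s' = if b' = b then 0 else t b' s' := by
  by_cases hb : b' = b
  · subst hb
    have hs : s' ≠ s := fun hs => h (by rw [hs])
    simp [updateTips_self, hs]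
  · simp [updateTips_of_ne, hb]

theorem updateTips_single_le {tb : Fin n → ℝ} (htb : ∀ s', 0 ≤ tb s') :
    updateTips t b (Pi.single s (tb s)) ≤ updateTips t b tb := by
  intro b' s'
  by_cases hb : b' = b
  · subst hb
    by_cases hs : s' = s
    · simp [updateTips_self, hs]
    · simp [updateTips_self, hs, htb s']
  · simp [updateTips_of_ne, hb]

/-- `sSup ∅ = 0`, the value when `(b, s)` is the only order, is harmless because of the outer
`max 0`. -/
def tipThreshold (d : Fin l) : ℝ :=
  max 0 (max (c d b s - w b s)
    (sSup ((fun o : Fin m × Fin n =>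
        w o.1 o.2 + (if o.1 = b then 0 else t o.1 o.2) - c d o.1 o.2 - w b s + c d b s) ''
      {o : Fin m × Fin n | o ≠ (b, s)})))

variable {c w b s}

theorem InBR.of_tips_le {t t' : Fin m → Fin n → ℝ} {d : Fin l} (h : InBR c w t d b s)
    (heq : t' b s = t b s) (hle : t' ≤ t) : InBR c w t' d b s := by
  unfold InBR cUtil at *
  rw [heq]
  exact ⟨h.1, fun b' s' => (by linarith [hle b' s', h.2 b' s'])⟩

theorem inBR_updateTips_single_iff {τ : ℝ} (hτ : 0 ≤ τ) (d : Fin l) :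
    InBR c w (updateTips t b (Pi.single s τ)) d b s ↔ tipThreshold c w t b s d ≤ τ := by
  have hbdd : BddAbove ((fun o : Fin m × Fin n =>
      w o.1 o.2 + (if o.1 = b then 0 else t o.1 o.2) - c d o.1 o.2 - w b s + c d b s) ''
        {o : Fin m × Fin n | o ≠ (b, s)}) :=
    ((Set.toFinite _).image _).bddAbove
  simp only [InBR, cUtil, tipThreshold, max_le_iff, sSup_le_iff_of_nonneg hbdd hτ,
    Set.forall_mem_image, updateTips_self, Pi.single_eq_same, hτ, true_and]
  refine and_congr (by constructor <;> intro <;> linarith) ⟨fun h o ho => ?_, fun h b' s' => ?_⟩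
  · have := h o.1 o.2
    rw [updateTips_single_of_ne t b s τ ho] at this
    linarith
  · by_cases ho : (b', s') = (b, s)
    · obtain ⟨rfl, rfl⟩ := Prod.mk.inj ho
      simp [updateTips_self]
    · have := h ho
      rw [updateTips_single_of_ne t b s τ ho]
      dsimp only at this
      linarith

theorem exists_inBR_iff_exists_tipThreshold_le {τ : ℝ} :
    (0 ≤ τ ∧ ∃ tb : Fin n → ℝ, (∀ s', 0 ≤ tb s') ∧ tb s = τ ∧
      ∃ d, InBR c w (updateTips t b tb) d b s) ↔ ∃ d, tipThreshold c w t b s d ≤ τ := by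
  constructor
  · rintro ⟨hτ, tb, htb, rfl, d, hd⟩
    exact ⟨d, (inBR_updateTips_single_iff t hτ d).1
      (hd.of_tips_le (by simp [updateTips_self]) (updateTips_single_le t b s htb))⟩
  · rintro ⟨d, hd⟩
    have hτ : 0 ≤ τ := (le_max_left _ _).trans hd
    exact ⟨hτ, Pi.single s τ, fun _ => by rw [Pi.single_apply]; positivity, by simp, d,
      (inBR_updateTips_single_iff t hτ d).2 hd⟩

end Threshold

theorem min_tip_closed_form_general
    (hl : 0 < l)
    (c : Fin l → Fin m → Fin n → ℝ)
    (w t : Fin m → Fin n → ℝ)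
    (b : Fin m) (s : Fin n) :
    minTip c w t b s =
      sInf (Set.range fun d : Fin l =>
        max 0 (max (c d b s - w b s)
          (sSup ((fun o : Fin m × Fin n =>
              w o.1 o.2 + (if o.1 = b then 0 else t o.1 o.2) - c d o.1 o.2
                - w b s + c d b s) ''
            {o : Fin m × Fin n | o ≠ (b, s)})))) ∧
    ∃ tb : Fin n → ℝ, (∀ s', 0 ≤ tb s') ∧ tb s = minTip c w t b s ∧
      (∀ s', s' ≠ s → tb s' = 0) ∧
      ∃ d, InBR c w (updateTips t b tb) d b s := by
  have : Nonempty (Fin l) := ⟨⟨0, hl⟩⟩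
  obtain ⟨d₀, hd₀⟩ := Finite.exists_min (tipThreshold c w t b s)
  have hleast : IsLeast {τ : ℝ | 0 ≤ τ ∧ ∃ tb : Fin n → ℝ, (∀ s', 0 ≤ tb s') ∧ tb s = τ ∧
      ∃ d, InBR c w (updateTips t b tb) d b s} (tipThreshold c w t b s d₀) :=
    ⟨exists_inBR_iff_exists_tipThreshold_le t |>.2 ⟨d₀, le_rfl⟩, fun τ hτ =>
      let ⟨d, hd⟩ := exists_inBR_iff_exists_tipThreshold_le t |>.1 hτ
      (hd₀ d).trans hd⟩
  have hminTip : minTip c w t b s = tipThreshold c w t b s d₀ := hleast.csInf_eq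
  have hrange : IsLeast (Set.range (tipThreshold c w t b s)) (tipThreshold c w t b s d₀) :=
    ⟨⟨d₀, rfl⟩, by rintro _ ⟨d, rfl⟩; exact hd₀ d⟩
  have hτ : 0 ≤ tipThreshold c w t b s d₀ := le_max_left _ _
  refine ⟨hminTip.trans hrange.csInf_eq.symm, Pi.single s _,
    fun _ => by rw [Pi.single_apply]; positivity, by simp [hminTip],
    fun s' hs' => Pi.single_eq_of_ne hs' _, d₀, (inBR_updateTips_single_iff t hτ d₀).2 le_rfl⟩

/-- Closed form for the minimum tip
`t̲_{bs} = min_d max{0, c_d(b,s) − w_{bs},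
  max_{(b',s') ≠ (b,s)} (w_{b's'} + t_{b's'} − c_d(b',s') − w_{bs} + c_d(b,s))}`,
where in the inner maximum `t_{bs'} = 0` for every store `s' ≠ s`; moreover the
minimum is attained by a tip vector that is zero away from `s`. -/
theorem min_tip_closed_form
    (hl : 0 < l)
    (c : Fin l → Fin m → Fin n → ℝ) (hc : ∀ d b s, 0 ≤ c d b s)
    (w t : Fin m → Fin n → ℝ) (hw : ∀ b s, 0 ≤ w b s) (ht : ∀ b s, 0 ≤ t b s)
    (b : Fin m) (s : Fin n) :
    minTip c w t b s =
      sInf (Set.range fun d : Fin l =>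
        max 0 (max (c d b s - w b s)
          (sSup ((fun o : Fin m × Fin n =>
              w o.1 o.2 + (if o.1 = b then 0 else t o.1 o.2) - c d o.1 o.2
                - w b s + c d b s) ''
            {o : Fin m × Fin n | o ≠ (b, s)})))) ∧
    ∃ tb : Fin n → ℝ, (∀ s', 0 ≤ tb s') ∧ tb s = minTip c w t b s ∧
      (∀ s', s' ≠ s → tb s' = 0) ∧
      ∃ d, InBR c w (updateTips t b tb) d b s :=
  min_tip_closed_form_general hl c w t b s

end DeliveryPlatform
end
end

section
/- First welfare theorem for three-sided competitive equilibrium: if (ψ*, p*) is a competitive equilibrium, then the set of trades ψ* maximizes total welfare Σ_{ω ∈ ψ*} Σ_{a ∈ ω} v^a(ω); moreover it does so even over all fractional solutions, i.e., Σ_{ω ∈ ψ*} Σ_{a ∈ ω} v^a(ω) ≥ Σ_{ω ∈ Ω} x_ω · Σ_{a ∈ ω} v^a(ω) for every x : Ω → [0,1] satisfying, for each agent a, Σ_{ω containing a} x_ω ≤ 1. -/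
/-!
The equilibrium utilities form a feasible solution of the dual of the fractional welfare
linear program. Budget balance turns the value of any fractional solution `x` into the sum,
over the three sides of the market, of `∑ ω, x ω * (v ω - p ω)`. On each side, every
trade's utility is bounded by the equilibrium utility of its participant (which is `0` for
agents who do not trade), and since each agent carries total weight at most `1` under `x`,
the side's contribution is at most the sum of the equilibrium utilities of that side. Summing
the three sides gives back the welfare of `ψ`; a matching is the special case of a
`0`/`1`-valued `x`.
-/

namespace ThreeSidedCE

open Finset

section OneSide

variable {Ω α R : Type*} [DecidableEq α] [CommRing R] [LinearOrder R] [IsStrictOrderedRing R]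

/-- One side of the market is at equilibrium: `π ω` is the agent of this side taking part in
trade `ω`, and `w ω` is her utility from `ω` at the given prices. -/
structure IsSideEquilibrium (π : Ω → α) (w : Ω → R) (ψ : Finset Ω) : Prop where
  injOn : Set.InjOn π ψ
  nonneg : ∀ ω ∈ ψ, 0 ≤ w ω
  le_of_mem : ∀ ω ∈ ψ, ∀ ω', π ω' = π ω → w ω' ≤ w ω
  nonpos_of_forall_ne : ∀ i, (∀ ω ∈ ψ, π ω ≠ i) → ∀ ω', π ω' = i → w ω' ≤ 0

/-- Agent `i`'s utility in `ψ`: the fiber holds at most one trade, and none if `i` does not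
trade. -/
def equilibriumUtility (π : Ω → α) (w : Ω → R) (ψ : Finset Ω) (i : α) : R :=
  ∑ ω ∈ ψ with π ω = i, w ω

namespace IsSideEquilibrium

variable {π : Ω → α} {w : Ω → R} {ψ : Finset Ω}

theorem equilibriumUtility_nonneg (h : IsSideEquilibrium π w ψ) (i : α) :
    0 ≤ equilibriumUtility π w ψ i :=
  sum_nonneg fun ω hω => h.nonneg ω (mem_filter.1 hω).1

theorem le_equilibriumUtility (h : IsSideEquilibrium π w ψ) (ω' : Ω) :
    w ω' ≤ equilibriumUtility π w ψ (π ω') := by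
  by_cases htrades : ∃ ω ∈ ψ, π ω = π ω'
  · obtain ⟨ω, hω, hπ⟩ := htrades
    have hutility : equilibriumUtility π w ψ (π ω) = w ω :=
      sum_eq_single_of_mem ω (mem_filter.2 ⟨hω, rfl⟩) fun _ hω'' hne =>
        absurd (h.injOn (mem_filter.1 hω'').1 hω (mem_filter.1 hω'').2) hne
    rw [← hπ, hutility]
    exact h.le_of_mem ω hω ω' hπ.symm
  · push Not at htrades
    exact (h.nonpos_of_forall_ne _ htrades ω' rfl).trans (h.equilibriumUtility_nonneg _)

/-- Weak duality for one side: the equilibrium utilities bound every fractional solution. -/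
theorem sum_mul_le [Fintype Ω] [Fintype α] (h : IsSideEquilibrium π w ψ) {x : Ω → R}
    (hx : ∀ ω, 0 ≤ x ω) (hcap : ∀ i, ∑ ω with π ω = i, x ω ≤ 1) :
    ∑ ω, x ω * w ω ≤ ∑ ω ∈ ψ, w ω := by
  set u := equilibriumUtility π w ψ
  have hfiber (i : α) : ∑ ω with π ω = i, x ω * u (π ω) ≤ u i := by
    rw [sum_congr rfl fun ω hω => by rw [(mem_filter.1 hω).2], ← sum_mul]
    exact mul_le_of_le_one_left (h.equilibriumUtility_nonneg i) (hcap i)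
  calc ∑ ω, x ω * w ω ≤ ∑ ω, x ω * u (π ω) :=
        sum_le_sum fun ω _ => mul_le_mul_of_nonneg_left (h.le_equilibriumUtility ω) (hx ω)
    _ = ∑ i, ∑ ω with π ω = i, x ω * u (π ω) := (sum_fiberwise univ π _).symm
    _ ≤ ∑ i, u i := sum_le_sum fun i _ => hfiber i
    _ = ∑ ω ∈ ψ, w ω := sum_fiberwise ψ π w

end IsSideEquilibrium

theorem sum_boole_filter_le_one {π : Ω → α} {ψ : Finset Ω} [Fintype Ω] [DecidableEq Ω]
    (hinj : Set.InjOn π ψ) (i : α) :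
    ∑ ω with π ω = i, (if ω ∈ ψ then 1 else 0 : R) ≤ 1 := by
  rw [sum_boole, Nat.cast_le_one, card_le_one]
  intro a ha b hb
  simp only [mem_filter, mem_univ, true_and] at ha hb
  exact hinj ha.2 hb.2 (ha.1.trans hb.1.symm)

end OneSide

section ThreeSided

variable {B S D : Type*}

def IsMatching (ψ : Finset (B × S × D)) : Prop :=
  ∀ ω ∈ ψ, ∀ ω' ∈ ψ, (ω.1 = ω'.1 ∨ ω.2.1 = ω'.2.1 ∨ ω.2.2 = ω'.2.2) → ω = ω'

theorem IsMatching.injOn {ψ : Finset (B × S × D)} (hψ : IsMatching ψ) :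
    Set.InjOn (fun ω : B × S × D => ω.1) ψ ∧ Set.InjOn (fun ω : B × S × D => ω.2.1) ψ ∧
      Set.InjOn (fun ω : B × S × D => ω.2.2) ψ :=
  ⟨fun _ h _ h' e => hψ _ h _ h' (.inl e), fun _ h _ h' e => hψ _ h _ h' (.inr (.inl e)),
    fun _ h _ h' e => hψ _ h _ h' (.inr (.inr e))⟩

variable [Fintype B] [Fintype S] [Fintype D] [DecidableEq B] [DecidableEq S] [DecidableEq D]
  {vB vS vD pB pS pD : B × S × D → ℝ} {ψ : Finset (B × S × D)}

theorem fractional_welfare_le (hbal : ∀ ω, pB ω + pS ω + pD ω = 0)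
    (hB : IsSideEquilibrium (·.1) (fun ω => vB ω - pB ω) ψ)
    (hS : IsSideEquilibrium (·.2.1) (fun ω => vS ω - pS ω) ψ)
    (hD : IsSideEquilibrium (·.2.2) (fun ω => vD ω - pD ω) ψ)
    {x : B × S × D → ℝ} (hx : ∀ ω, 0 ≤ x ω)
    (hcapB : ∀ i, ∑ ω with ω.1 = i, x ω ≤ 1) (hcapS : ∀ j, ∑ ω with ω.2.1 = j, x ω ≤ 1)
    (hcapD : ∀ k, ∑ ω with ω.2.2 = k, x ω ≤ 1) :
    ∑ ω, x ω * (vB ω + vS ω + vD ω) ≤ ∑ ω ∈ ψ, (vB ω + vS ω + vD ω) := by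
  have hsplit (ω : B × S × D) :
      vB ω + vS ω + vD ω = (vB ω - pB ω) + (vS ω - pS ω) + (vD ω - pD ω) := by
    linarith [hbal ω]
  simp only [hsplit, mul_add, sum_add_distrib]
  gcongr ?_ + ?_ + ?_
  · exact hB.sum_mul_le hx hcapB
  · exact hS.sum_mul_le hx hcapS
  · exact hD.sum_mul_le hx hcapD

theorem welfare_le_of_isMatching (hbal : ∀ ω, pB ω + pS ω + pD ω = 0)
    (hB : IsSideEquilibrium (·.1) (fun ω => vB ω - pB ω) ψ)
    (hS : IsSideEquilibrium (·.2.1) (fun ω => vS ω - pS ω) ψ)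
    (hD : IsSideEquilibrium (·.2.2) (fun ω => vD ω - pD ω) ψ)
    {ψ' : Finset (B × S × D)} (hψ' : IsMatching ψ') :
    ∑ ω ∈ ψ', (vB ω + vS ω + vD ω) ≤ ∑ ω ∈ ψ, (vB ω + vS ω + vD ω) := by
  obtain ⟨hinjB, hinjS, hinjD⟩ := IsMatching.injOn hψ'
  have h := fractional_welfare_le hbal hB hS hD (x := fun ω => if ω ∈ ψ' then 1 else 0)
    (fun ω => by split_ifs <;> norm_num) (sum_boole_filter_le_one hinjB)
    (sum_boole_filter_le_one hinjS) (sum_boole_filter_le_one hinjD)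
  simpa only [ite_mul, one_mul, zero_mul, sum_ite_mem, univ_inter] using h

end ThreeSided

/-- First welfare theorem for three-sided competitive equilibrium.
Agents are buyers, stores and couriers, each indexed by `Fin n`; a trade
`ω = (i, j, k)` involves buyer `ω.1`, store `ω.2.1` and courier `ω.2.2`, with
valuations `vB ω`, `vS ω`, `vD ω` for its three participants and payments
`pB ω`, `pS ω`, `pD ω`. If `(ψ, p)` is a competitive equilibrium (budget-balanced
prices, no agent in more than one trade, every participating agent weakly
prefers her trade to every trade involving her and to not trading, and every
non-participating agent weakly prefers not trading), then `ψ` maximizes total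
welfare over all matchings, and indeed over all fractional solutions. -/
theorem first_welfare_theorem_three_sided
    (n : ℕ)
    (vB vS vD : Fin n × Fin n × Fin n → ℝ)
    (pB pS pD : Fin n × Fin n × Fin n → ℝ)
    (hbal : ∀ ω, pB ω + pS ω + pD ω = 0)
    (ψ : Finset (Fin n × Fin n × Fin n))
    (hdisj : ∀ ω ∈ ψ, ∀ ω' ∈ ψ,
      (ω.1 = ω'.1 ∨ ω.2.1 = ω'.2.1 ∨ ω.2.2 = ω'.2.2) → ω = ω')
    (hB : ∀ ω ∈ ψ, 0 ≤ vB ω - pB ω ∧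
      ∀ ω', ω'.1 = ω.1 → vB ω' - pB ω' ≤ vB ω - pB ω)
    (hS : ∀ ω ∈ ψ, 0 ≤ vS ω - pS ω ∧
      ∀ ω', ω'.2.1 = ω.2.1 → vS ω' - pS ω' ≤ vS ω - pS ω)
    (hD : ∀ ω ∈ ψ, 0 ≤ vD ω - pD ω ∧
      ∀ ω', ω'.2.2 = ω.2.2 → vD ω' - pD ω' ≤ vD ω - pD ω)
    (hBout : ∀ i : Fin n, (∀ ω ∈ ψ, ω.1 ≠ i) →
      ∀ ω', ω'.1 = i → vB ω' - pB ω' ≤ 0)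
    (hSout : ∀ j : Fin n, (∀ ω ∈ ψ, ω.2.1 ≠ j) →
      ∀ ω', ω'.2.1 = j → vS ω' - pS ω' ≤ 0)
    (hDout : ∀ k : Fin n, (∀ ω ∈ ψ, ω.2.2 ≠ k) →
      ∀ ω', ω'.2.2 = k → vD ω' - pD ω' ≤ 0) :
    (∀ ψ' : Finset (Fin n × Fin n × Fin n),
      (∀ ω ∈ ψ', ∀ ω' ∈ ψ',
        (ω.1 = ω'.1 ∨ ω.2.1 = ω'.2.1 ∨ ω.2.2 = ω'.2.2) → ω = ω') →
      ∑ ω ∈ ψ', (vB ω + vS ω + vD ω) ≤ ∑ ω ∈ ψ, (vB ω + vS ω + vD ω)) ∧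
    (∀ x : Fin n × Fin n × Fin n → ℝ,
      (∀ ω, 0 ≤ x ω ∧ x ω ≤ 1) →
      (∀ i : Fin n, ∑ ω ∈ Finset.univ.filter (fun ω => ω.1 = i), x ω ≤ 1) →
      (∀ j : Fin n, ∑ ω ∈ Finset.univ.filter (fun ω => ω.2.1 = j), x ω ≤ 1) →
      (∀ k : Fin n, ∑ ω ∈ Finset.univ.filter (fun ω => ω.2.2 = k), x ω ≤ 1) →
      ∑ ω : Fin n × Fin n × Fin n, x ω * (vB ω + vS ω + vD ω) ≤
        ∑ ω ∈ ψ, (vB ω + vS ω + vD ω)) := by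
  obtain ⟨hinjB, hinjS, hinjD⟩ := IsMatching.injOn hdisj
  have hB' : IsSideEquilibrium (·.1) (fun ω => vB ω - pB ω) ψ :=
    ⟨hinjB, fun ω hω => (hB ω hω).1, fun ω hω => (hB ω hω).2, hBout⟩
  have hS' : IsSideEquilibrium (·.2.1) (fun ω => vS ω - pS ω) ψ :=
    ⟨hinjS, fun ω hω => (hS ω hω).1, fun ω hω => (hS ω hω).2, hSout⟩
  have hD' : IsSideEquilibrium (·.2.2) (fun ω => vD ω - pD ω) ψ :=
    ⟨hinjD, fun ω hω => (hD ω hω).1, fun ω hω => (hD ω hω).2, hDout⟩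
  exact ⟨fun _ hψ' => welfare_le_of_isMatching hbal hB' hS' hD' hψ',
    fun _ hx => fractional_welfare_le hbal hB' hS' hD' fun ω => (hx ω).1⟩

end ThreeSidedCE
end
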